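/- arXiv:2407.16814 — 5 statements merged into one kernel-verified Lean document; each statement's English description precedes it below -/
import Mathlib

section
/- Let β ∈ F_q* (so β^q = β after fixing β ∈ F_q), and let A ∈ F_{q^m}^n be given with A_j = Σ_{i=0}^{n-1} a_i (βξ^j)^i. Then all a_i lie in F_q if and only if A_j^q = A_{(qj) mod n} for all j = 0, 1, ..., n-1. -/
/-!
The `q`-th power map is a ring endomorphism of `F` fixing `β` and sending `βξ^j` to
`βξ^(qj mod n)`, so `A_j^q` is the transform of `(a_i^q)` at index `qj mod n`. As `p ∤ n`,
`j ↦ qj mod n` permutes the indices, so the condition says that `(a_i^q)` and `(a_i)` have the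
same transform; the transform is injective because the points `βξ^j` are distinct (Vandermonde).
-/

theorem IsPrimitiveRoot.coprime_of_charP {R : Type*} [CommRing R] [IsDomain R] {p n : ℕ}
    [CharP R p] {ζ : R} (hp : p.Prime) (hn : 0 < n) (hζ : IsPrimitiveRoot ζ n) :
    p.Coprime n := by
  have : NeZero n := ⟨hn.ne'⟩
  refine hp.coprime_iff_not_dvd.2 fun hdvd => ?_
  exact hζ.neZero'.out ((CharP.cast_eq_zero_iff R p n).2 hdvd)

theorem Nat.Coprime.surjective_fin_mul_mod {q n : ℕ} (hn : 0 < n) (hq : q.Coprime n) :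
    Function.Surjective (fun j : Fin n => (⟨q * j % n, Nat.mod_lt _ hn⟩ : Fin n)) := by
  refine Finite.injective_iff_surjective.1 fun i j hij => Fin.ext ?_
  have hmod : q * i ≡ q * j [MOD n] := congrArg Fin.val hij
  exact Nat.ModEq.eq_of_lt_of_lt (Nat.ModEq.cancel_left_of_coprime hq.symm hmod) i.2 j.2

theorem sum_mul_pow_pow_char_pow {R ι : Type*} [CommSemiring R] (p s : ℕ) [ExpChar R p]
    (t : Finset ι) (c : ι → R) (e : ι → ℕ) (x : R) :
    (∑ i ∈ t, c i * x ^ e i) ^ p ^ s = ∑ i ∈ t, c i ^ p ^ s * (x ^ p ^ s) ^ e i := by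
  simp only [sum_pow_char_pow, mul_pow, ← pow_mul, mul_comm]

theorem fFFT_conjugate_symmetry_general
    (p s q m n : ℕ) (hp : p.Prime) (hq : q = p ^ s)
    (hn : 0 < n) (F : Type*) [Field F] [Fintype F]
    (hcard : Fintype.card F = q ^ m)
    (ξ β : F) (hξ : IsPrimitiveRoot ξ n) (hβ : β ≠ 0) (hβq : β ^ q = β)
    (a A : Fin n → F)
    (hA : ∀ j : Fin n, A j = ∑ i : Fin n, a i * (β * ξ ^ (j : ℕ)) ^ (i : ℕ)) :
    (∀ i : Fin n, (a i) ^ q = a i) ↔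
      (∀ j : Fin n, (A j) ^ q = A ⟨(q * (j : ℕ)) % n, Nat.mod_lt _ hn⟩) := by
  have : Fact p.Prime := ⟨hp⟩
  have : CharP F p := charP_of_card_eq_prime_pow (f := s * m) (by rw [hcard, hq, pow_mul])
  set x : Fin n → F := fun j => β * ξ ^ (j : ℕ)
  have hA' (j : Fin n) : A j = ∑ i : Fin n, a i * x j ^ (i : ℕ) := hA j
  have hx_inj : Function.Injective x := fun i j hij =>
    Fin.ext <| hξ.pow_inj i.2 j.2 <| mul_left_cancel₀ hβ hij
  have hx_pow (j : Fin n) : x j ^ q = x ⟨q * j % n, Nat.mod_lt _ hn⟩ := by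
    rw [mul_pow, hβq, ← pow_mul, mul_comm (j : ℕ) q, pow_eq_pow_mod _ hξ.pow_eq_one]
  have hA_pow (j : Fin n) :
      A j ^ q = ∑ i : Fin n, a i ^ q * x ⟨q * j % n, Nat.mod_lt _ hn⟩ ^ (i : ℕ) := by
    rw [hA', ← hx_pow, hq, sum_mul_pow_pow_char_pow]
  constructor
  · intro ha j
    rw [hA_pow, hA']
    simp only [ha]
  · intro hAq
    have hcop : q.Coprime n := hq ▸ (hξ.coprime_of_charP hp hn).pow_left s
    have hvanish := Matrix.eq_zero_of_forall_index_sum_mul_pow_eq_zero hx_inj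
      (v := fun i => a i ^ q - a i) fun k => by
        obtain ⟨j, rfl⟩ := hcop.surjective_fin_mul_mod hn k
        rw [Finset.sum_congr rfl fun i _ => sub_mul _ _ _, Finset.sum_sub_distrib, ← hA_pow,
          hAq j, hA', sub_self]
    exact fun i => sub_eq_zero.1 (congrFun hvanish i)

/-- conjugate symmetry property. With `β ∈ F_q` (i.e. `β^q = β`) nonzero,
all components `aᵢ` of the inverse FFFT of `A` lie in `F_q` (characterized by
`x^q = x`) if and only if `Aⱼ^q = A_{(qj) mod n}` for all `j`. -/
theorem fFFT_conjugate_symmetry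
    (p s q m n : ℕ) (hp : p.Prime) (hs : 0 < s) (hq : q = p ^ s) (hm : 0 < m)
    (hn : 0 < n) (F : Type*) [Field F] [Fintype F]
    (hcard : Fintype.card F = q ^ m) (hdvd : n ∣ q ^ m - 1)
    (ξ β : F) (hξ : IsPrimitiveRoot ξ n) (hβ : β ≠ 0) (hβq : β ^ q = β)
    (a A : Fin n → F)
    (hA : ∀ j : Fin n, A j = ∑ i : Fin n, a i * (β * ξ ^ (j : ℕ)) ^ (i : ℕ)) :
    (∀ i : Fin n, (a i) ^ q = a i) ↔
      (∀ j : Fin n, (A j) ^ q = A ⟨(q * (j : ℕ)) % n, Nat.mod_lt _ hn⟩) :=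
  fFFT_conjugate_symmetry_general p s q m n hp hq hn F hcard ξ β hξ hβ hβq a A hA
end

section
/- Let C be a λ-constacyclic code of length n over F_q generated by g(x) of degree n - k with λ = λ^{-1}. Then C^⊥ ⊆ C if and only if g(x)·g†(x) divides x^n - λ, where g†(x) = x^{n-k} g(1/x). -/
open Polynomial

/-- The `λ`-constacyclic code of length `n` over `F` generated by `g`, viewed as a set
of vectors: `v` is a codeword iff its associated polynomial lies in the ideal
generated by `g` in `F[x]/⟨xⁿ - λ⟩`. -/
def constaCode (F : Type*) [Field F] (n : ℕ) (lam : F) (g : F[X]) : Set (Fin n → F) :=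
  {v | Ideal.Quotient.mk (Ideal.span {(X : F[X]) ^ n - C lam})
        (∑ i : Fin n, C (v i) * X ^ (i : ℕ)) ∈
      Ideal.span {Ideal.Quotient.mk (Ideal.span {(X : F[X]) ^ n - C lam}) g}}

/-!
Write `Xⁿ - λ = g h`. For words of length `n`, viewed as polynomials of degree `< n`, the pairing
`∑ vᵢ wᵢ` is the coefficient of `x^(n-1)` in `v(x) · x^(n-1) w(1/x)`. Testing `w` against the
codewords `g xʲ` shows that `w ∈ C^⊥` iff `Xⁿ - λ ∣ g · x^(n-1) w(1/x)`, i.e. iff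
`h ∣ x^(n-1) w(1/x)`. Since `λ ≠ 0` we have `g(0) ≠ 0`, so reflection transports divisibility by
`g` to divisibility by `g†` and back. Hence `C^⊥ ⊆ C` iff `g† ∣ h`, i.e. iff `g g† ∣ Xⁿ - λ`.
-/

namespace Polynomial

theorem natDegree_reflect_natDegree {R : Type*} [Semiring R] {g : R[X]} (hg : g.coeff 0 ≠ 0) :
    (g.reflect g.natDegree).natDegree = g.natDegree := by
  rw [← reverse, reverse_natDegree, natTrailingDegree_eq_zero.mpr (Or.inr hg), Nat.sub_zero]

section Reflect

variable {R : Type*} [CommRing R] [NoZeroDivisors R] {g p : R[X]} {N : ℕ}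

theorem reflect_natDegree_dvd_reflect_of_dvd (hp : p.natDegree ≤ N) (hgp : g ∣ p) :
    g.reflect g.natDegree ∣ p.reflect N := by
  obtain ⟨t, rfl⟩ := hgp
  by_cases hgt : g * t = 0
  · simp [hgt]
  obtain ⟨hg, ht⟩ := mul_ne_zero_iff.mp hgt
  rw [natDegree_mul hg ht] at hp
  rw [show N = g.natDegree + (N - g.natDegree) by omega, reflect_mul g t le_rfl (by omega)]
  exact dvd_mul_right _ _

theorem dvd_of_reflect_natDegree_dvd_reflect (hg : g.coeff 0 ≠ 0) (hp : p.natDegree ≤ N)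
    (hgp : g.reflect g.natDegree ∣ p.reflect N) : g ∣ p := by
  simpa [natDegree_reflect_natDegree hg] using
    reflect_natDegree_dvd_reflect_of_dvd (natDegree_reflect_le.trans (max_le le_rfl hp)) hgp

end Reflect

section XPowSubC

variable {R : Type*} [CommRing R] {n : ℕ} {a : R} {g p : R[X]}

theorem coeff_zero_ne_zero_of_dvd_X_pow_sub_C (hn : 0 < n) (ha : a ≠ 0) (hg : g ∣ X ^ n - C a) :
    g.coeff 0 ≠ 0 := by
  rw [Ne, ← X_dvd_iff]
  intro hX
  have := X_dvd_iff.mp (hX.trans hg)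
  simp [coeff_X_pow, hn.ne, ha] at this

theorem coeff_eq_zero_of_X_pow_sub_C_dvd [Nontrivial R] {e m : ℕ} (hdvd : X ^ n - C a ∣ p)
    (hp : p.natDegree < e + n) (hem : e ≤ m) (hmn : m < n) : p.coeff m = 0 := by
  obtain ⟨t, rfl⟩ := hdvd
  have ht : t.coeff m = 0 := by
    by_cases ht0 : t = 0
    · simp [ht0]
    rw [(monic_X_pow_sub_C a (by omega)).natDegree_mul' ht0, natDegree_X_pow_sub_C] at hp
    exact coeff_eq_zero_of_natDegree_lt (by omega)
  rw [sub_mul, coeff_sub, coeff_X_pow_mul', if_neg (by omega), coeff_C_mul, ht, mul_zero, sub_zero]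

/-- The remainder of `p` modulo `Xⁿ - C a` agrees with `p` in degrees `deg g ≤ m < n`, because
the quotient has degree `< deg g`; so it has degree `< deg g` and, being a multiple of `g`,
vanishes. -/
theorem X_pow_sub_C_dvd_of_coeff_eq_zero [IsDomain R] (hn : 0 < n) (hg : g ∣ X ^ n - C a) (hgp : g ∣ p)
    (hp : p.natDegree < g.natDegree + n)
    (hcoeff : ∀ m, g.natDegree ≤ m → m < n → p.coeff m = 0) : X ^ n - C a ∣ p := by
  have hmonic : (X ^ n - C a : R[X]).Monic := monic_X_pow_sub_C a hn.ne'
  set r := p %ₘ (X ^ n - C a)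
  have hr : r = p - (X ^ n - C a) * (p /ₘ (X ^ n - C a)) := modByMonic_eq_sub_mul_div _ _
  have hrdeg : r.degree < n := by
    simpa [degree_eq_natDegree hmonic.ne_zero] using degree_modByMonic_lt p hmonic
  have hrnat : r.natDegree < n := by
    by_cases hr0 : r = 0
    · simp [hr0, hn]
    · exact (natDegree_lt_iff_degree_lt hr0).mpr hrdeg
  have hquot : ((X ^ n - C a) * (p /ₘ (X ^ n - C a))).natDegree < g.natDegree + n := by
    rw [show (X ^ n - C a) * (p /ₘ (X ^ n - C a)) = p - r by rw [hr]; ring]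
    exact (natDegree_sub_le p r).trans_lt (max_lt hp (by omega))
  have hr_lt : r.degree < g.natDegree := by
    rw [degree_lt_iff_coeff_zero]
    intro m hm
    by_cases hmn : m < n
    · rw [hr, coeff_sub, hcoeff m hm hmn,
        coeff_eq_zero_of_X_pow_sub_C_dvd (dvd_mul_right _ _) hquot hm hmn, sub_zero]
    · exact coeff_eq_zero_of_natDegree_lt (by omega)
  have hg0 : g ≠ 0 := ne_zero_of_dvd_ne_zero hmonic.ne_zero hg
  rw [← modByMonic_eq_zero_iff_dvd hmonic]
  exact eq_zero_of_dvd_of_degree_lt (hr ▸ dvd_sub hgp (hg.mul_right _))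
    (by rwa [degree_eq_natDegree hg0])

end XPowSubC

section OfFn

variable {R : Type*} [Semiring R] [DecidableEq R] {n : ℕ}

theorem ofFn_eq_sum_C_mul_X_pow (v : Fin n → R) :
    ofFn n v = ∑ i : Fin n, C (v i) * X ^ (i : ℕ) := by
  simp [ofFn_eq_sum_monomial, C_mul_X_pow_eq_monomial]

theorem sum_mul_eq_coeff_ofFn_mul_reflect_ofFn (hn : 0 < n) (v w : Fin n → R) :
    ∑ i : Fin n, v i * w i = (ofFn n v * (ofFn n w).reflect (n - 1)).coeff (n - 1) := by
  rw [coeff_mul, Finset.Nat.sum_antidiagonal_eq_sum_range_succ_mk, Nat.succ_eq_add_one,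
    Nat.sub_add_cancel hn, ← Fin.sum_univ_eq_sum_range]
  refine Finset.sum_congr rfl fun i _ => ?_
  rw [coeff_reflect, revAt_le (by omega), Nat.sub_sub_self (by omega),
    ofFn_coeff_eq_val_of_lt _ i.isLt, ofFn_coeff_eq_val_of_lt _ i.isLt]

end OfFn

end Polynomial

section ConstaCode

variable {F : Type*} [Field F] [DecidableEq F] {n : ℕ} {lam : F} {g : F[X]}

theorem mem_constaCode_iff (hg : g ∣ X ^ n - C lam) (v : Fin n → F) :
    v ∈ constaCode F n lam g ↔ g ∣ ofFn n v := by
  have hspan : Ideal.span {Ideal.Quotient.mk (Ideal.span {X ^ n - C lam}) g} =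
      (Ideal.span {g}).map (Ideal.Quotient.mk _) := by
    rw [Ideal.map_span, Set.image_singleton]
  rw [constaCode, Set.mem_ofPred_eq, ← ofFn_eq_sum_C_mul_X_pow, hspan,
    Ideal.mem_quotient_iff_mem_sup,
    sup_eq_left.mpr (Ideal.span_singleton_le_span_singleton.mpr hg), Ideal.mem_span_singleton]

theorem forall_mem_constaCode_sum_mul_eq_zero_iff {h : F[X]} (hn : 0 < n)
    (hgh : X ^ n - C lam = g * h) (w : Fin n → F) :
    (∀ v ∈ constaCode F n lam g, ∑ i : Fin n, v i * w i = 0) ↔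
      h ∣ (ofFn n w).reflect (n - 1) := by
  have hg : g ∣ X ^ n - C lam := ⟨h, hgh⟩
  have hg0 : g ≠ 0 := ne_zero_of_dvd_ne_zero (X_pow_sub_C_ne_zero hn lam) hg
  have hw : ((ofFn n w).reflect (n - 1)).natDegree ≤ n - 1 :=
    natDegree_reflect_le.trans (max_le le_rfl (by have := ofFn_natDegree_lt hn w; omega))
  simp only [mem_constaCode_iff hg, sum_mul_eq_coeff_ofFn_mul_reflect_ofFn hn]
  rw [← mul_dvd_mul_iff_left hg0, ← hgh]
  constructor
  · intro horth
    refine X_pow_sub_C_dvd_of_coeff_eq_zero hn hg (dvd_mul_right _ _)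
      (natDegree_mul_le.trans_lt (by omega)) fun m hm hmn => ?_
    -- pair `w` with the codeword `g * X ^ j`, which reads off the coefficient `n - 1 - j`
    set j := n - 1 - m
    have hgX : (g * X ^ j).natDegree < n :=
      natDegree_mul_le.trans_lt (by rw [natDegree_X_pow]; omega)
    have h := horth (toFn n (g * X ^ j))
      (by rw [ofFn_comp_toFn_eq_id_of_natDegree_lt hgX]; exact dvd_mul_right _ _)
    rwa [ofFn_comp_toFn_eq_id_of_natDegree_lt hgX, mul_right_comm, coeff_mul_X_pow',
      if_pos (by omega), show n - 1 - j = m by omega] at h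
  · rintro hdvd v ⟨u, hu⟩
    have hv := ofFn_natDegree_lt hn v
    refine coeff_eq_zero_of_X_pow_sub_C_dvd (a := lam) (e := n - 1) ?_
      (natDegree_mul_le.trans_lt (by omega)) le_rfl (Nat.sub_one_lt hn.ne')
    rw [hu, mul_right_comm]
    exact hdvd.mul_right u

end ConstaCode

theorem constacyclic_dual_containing_iff_general
    (F : Type*) [Field F] (n k : ℕ) (hn : 0 < n)
    (lam : F) (hunit : lam ≠ 0)
    (g : F[X]) (hg : g ∣ ((X : F[X]) ^ n - C lam)) (hdeg : g.natDegree = n - k) :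
    (∀ w : Fin n → F,
        (∀ v ∈ constaCode F n lam g, ∑ i : Fin n, v i * w i = 0) →
          w ∈ constaCode F n lam g) ↔
      g * g.reflect (n - k) ∣ ((X : F[X]) ^ n - C lam) := by
  classical
  rw [← hdeg]
  obtain ⟨h, hgh⟩ := id hg
  have hgh0 : g * h ≠ 0 := hgh ▸ X_pow_sub_C_ne_zero hn lam
  have hg0 : g ≠ 0 := left_ne_zero_of_mul hgh0
  have hgc : g.coeff 0 ≠ 0 := coeff_zero_ne_zero_of_dvd_X_pow_sub_C hn hunit hg
  simp only [forall_mem_constaCode_sum_mul_eq_zero_iff hn hgh]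
  simp only [mem_constaCode_iff hg]
  rw [hgh, mul_dvd_mul_iff_left hg0]
  constructor
  · intro hcontain
    rcases Nat.eq_zero_or_pos g.natDegree with hd | hd
    · refine (isUnit_iff_degree_eq_zero.mpr ?_).dvd
      rw [degree_eq_natDegree (reflect_eq_zero_iff.not.mpr hg0), natDegree_reflect_natDegree hgc,
        hd, Nat.cast_zero]
    have hh : h.natDegree < n := by
      have := congrArg natDegree hgh
      rw [natDegree_X_pow_sub_C, natDegree_mul hg0 (right_ne_zero_of_mul hgh0)] at this
      omega
    have hP : (h.reflect (n - 1)).natDegree < n :=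
      natDegree_reflect_le.trans_lt (max_lt (by omega) hh)
    have hgP := hcontain (toFn n (h.reflect (n - 1)))
      (by rw [ofFn_comp_toFn_eq_id_of_natDegree_lt hP, reflect_reflect])
    rw [ofFn_comp_toFn_eq_id_of_natDegree_lt hP] at hgP
    simpa using reflect_natDegree_dvd_reflect_of_dvd (N := n - 1) (by omega) hgP
  · intro hgdag w hw
    have := ofFn_natDegree_lt hn w
    exact dvd_of_reflect_natDegree_dvd_reflect hgc (by omega) (hgdag.trans hw)

/-- a `λ`-constacyclic code `C` (with `λ = λ⁻¹`) generated by `g` of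
degree `n - k` is dual-containing (`C^⊥ ⊆ C`) iff `g·g†` divides `xⁿ - λ`,
where `g† = x^{n-k} g(1/x)` is the reciprocal polynomial. -/
theorem constacyclic_dual_containing_iff
    (F : Type*) [Field F] (n k : ℕ) (hn : 0 < n) (hk : k ≤ n)
    (lam : F) (hunit : lam ≠ 0) (hlam : lam * lam = 1)
    (g : F[X]) (hg : g ∣ ((X : F[X]) ^ n - C lam)) (hdeg : g.natDegree = n - k) :
    (∀ w : Fin n → F,
        (∀ v ∈ constaCode F n lam g, ∑ i : Fin n, v i * w i = 0) →
          w ∈ constaCode F n lam g) ↔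
      g * g.reflect (n - k) ∣ ((X : F[X]) ^ n - C lam) :=
  constacyclic_dual_containing_iff_general F n k hn lam hunit g hg hdeg
end

section
/- Let L = p^η n with p prime, p ∤ n, and let C be a λ-constacyclic code of length L over F_q (char p) with generator g(x) = Π_{l=1}^{ρ₁} M_{i_l}(β^{-1}x)^{a_l} · Π_{l=1}^{ρ₂} M_{j_l}(β^{-1}x)^{b_l} M_{-j_l}(β^{-1}x)^{c_l}, where the M's are the irreducible factors corresponding to symmetric cosets C_{i_l} and asymmetric coset pairs (C_{j_l}, C_{-j_l}). Then C ⊆ C^⊥ if and only if 2a_l ≥ p^η for all l and b_l + c_l ≥ p^η for all l. -/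
/-!
Since `p ∤ n`, the polynomial `xⁿ - βⁿ` is separable, and in characteristic `p` its
`pᶯ`-th power is `x^L - λ`. The given factorisation of `x^L - λ` therefore shows that
the product of all the factors `M_r(β⁻¹x)` divides `xⁿ - βⁿ`, so these factors (non-units,
as cosets are non-empty) are pairwise coprime. Divisibility between products of their powers is then a
comparison of exponents: `h† ∣ g` iff `pᶯ - a_l ≤ a_l`, `pᶯ - c_l ≤ b_l` and
`pᶯ - b_l ≤ c_l` for all `l`.
-/

open Polynomial

/-- The `q`-cyclotomic coset of `r` modulo `n`: `{r·qᵗ mod n : t ≥ 0}` (the powers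
repeat with period at most `n`). -/
def qCoset (q n : ℕ) (r : ZMod n) : Finset (ZMod n) :=
  (Finset.range n).image (fun t => r * (q : ZMod n) ^ t)

/-- The minimal polynomial `M_r(x) = ∏_{i ∈ C_r} (x - ξⁱ)` associated with the
`q`-cyclotomic coset `C_r`. -/
noncomputable def cosetMinPoly (F : Type*) [Field F] (q n : ℕ) (ξ : F) (r : ZMod n) :
    Polynomial F :=
  ∏ i ∈ qCoset q n r, (Polynomial.X - Polynomial.C (ξ ^ i.val))

theorem isRelPrime_of_squarefree_prod {α ι : Type*} [CommMonoid α] [Fintype ι] {f : ι → α}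
    (hf : Squarefree (∏ s, f s)) {s t : ι} (hst : s ≠ t) : IsRelPrime (f s) (f t) := by
  classical
  refine IsRelPrime.of_squarefree_mul (hf.squarefree_of_dvd ?_)
  rw [← Finset.prod_pair hst]
  exact Finset.prod_dvd_prod_of_subset _ _ f (Finset.subset_univ _)

theorem prod_pow_dvd_prod_pow_iff_of_squarefree {α ι : Type*} [CommMonoidWithZero α]
    [IsCancelMulZero α] [DecompositionMonoid α] [Nontrivial α] [Fintype ι] {f : ι → α}
    (hf : Squarefree (∏ s, f s)) (hu : ∀ s, ¬IsUnit (f s)) {m k : ι → ℕ} :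
    (∏ s, f s ^ m s) ∣ (∏ s, f s ^ k s) ↔ ∀ s, m s ≤ k s := by
  classical
  refine ⟨fun hdvd s => ?_, fun h =>
    Finset.prod_dvd_prod_of_dvd _ _ fun s _ => pow_dvd_pow _ (h s)⟩
  have hfs : f s ≠ 0 := fun h0 => hf.ne_zero (Finset.prod_eq_zero (Finset.mem_univ s) h0)
  have hcop : IsRelPrime (f s ^ m s) (∏ t ∈ Finset.univ.erase s, f t ^ k t) :=
    IsRelPrime.prod_right fun t ht =>
      (isRelPrime_of_squarefree_prod hf (Finset.ne_of_mem_erase ht).symm).pow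
  have hdvd' : f s ^ m s ∣ f s ^ k s * ∏ t ∈ Finset.univ.erase s, f t ^ k t := by
    rw [Finset.mul_prod_erase _ (fun t => f t ^ k t) (Finset.mem_univ s)]
    exact (Finset.dvd_prod_of_mem (fun t => f t ^ m t) (Finset.mem_univ s)).trans hdvd
  exact (pow_dvd_pow_iff hfs (hu s)).mp (hcop.dvd_of_dvd_mul_right hdvd')

theorem mem_qCoset_self (q : ℕ) {n : ℕ} [NeZero n] (r : ZMod n) : r ∈ qCoset q n r :=
  Finset.mem_image.mpr ⟨0, Finset.mem_range.mpr (NeZero.pos n), by simp⟩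

theorem natDegree_cosetMinPoly (F : Type*) [Field F] (q n : ℕ) (ξ : F) (r : ZMod n) :
    (cosetMinPoly F q n ξ r).natDegree = (qCoset q n r).card := by
  rw [cosetMinPoly, natDegree_prod _ _ fun i _ => X_sub_C_ne_zero (ξ ^ i.val)]
  simp only [natDegree_X_sub_C, Finset.sum_const, smul_eq_mul, mul_one]

theorem not_isUnit_cosetMinPoly_comp {F : Type*} [Field F] (q : ℕ) {n : ℕ} [NeZero n] (ξ : F)
    {β : F} (hβ : β ≠ 0) (r : ZMod n) :
    ¬IsUnit ((cosetMinPoly F q n ξ r).comp (C β⁻¹ * X)) := by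
  refine not_isUnit_of_natDegree_pos _ ?_
  rw [natDegree_comp, natDegree_C_mul_X _ (inv_ne_zero hβ), mul_one, natDegree_cosetMinPoly]
  exact Finset.card_pos.mpr ⟨r, mem_qCoset_self q r⟩

theorem repeatedRoot_weakly_self_dual_iff_general
    (F : Type*) [Field F] (p η n q L ρ₁ ρ₂ : ℕ) [Fact p.Prime] [CharP F p]
    (hpn : ¬ p ∣ n) (hL : L = p ^ η * n)
    (ξ β lam : F) (hβ : β ≠ 0) (hlam : β ^ L = lam)
    (i : Fin ρ₁ → ZMod n) (j : Fin ρ₂ → ZMod n)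
    (a : Fin ρ₁ → ℕ) (b c : Fin ρ₂ → ℕ)
    (hfact : (X : F[X]) ^ L - C lam =
      C lam * (∏ l, ((cosetMinPoly F q n ξ (i l)).comp (C β⁻¹ * X)) ^ (p ^ η)) *
        ∏ l, ((cosetMinPoly F q n ξ (j l)).comp (C β⁻¹ * X) *
              (cosetMinPoly F q n ξ (-(j l))).comp (C β⁻¹ * X)) ^ (p ^ η))
    (g hdag : F[X])
    (hg : g = (∏ l, ((cosetMinPoly F q n ξ (i l)).comp (C β⁻¹ * X)) ^ (a l)) *
      ∏ l, ((cosetMinPoly F q n ξ (j l)).comp (C β⁻¹ * X)) ^ (b l) *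
            ((cosetMinPoly F q n ξ (-(j l))).comp (C β⁻¹ * X)) ^ (c l))
    (hh : hdag = (∏ l, ((cosetMinPoly F q n ξ (i l)).comp (C β⁻¹ * X)) ^ (p ^ η - a l)) *
      ∏ l, ((cosetMinPoly F q n ξ (-(j l))).comp (C β⁻¹ * X)) ^ (p ^ η - b l) *
            ((cosetMinPoly F q n ξ (j l)).comp (C β⁻¹ * X)) ^ (p ^ η - c l)) :
    hdag ∣ g ↔ (∀ l, p ^ η ≤ 2 * a l) ∧ (∀ l, p ^ η ≤ b l + c l) := by
  have : NeZero n := ⟨by rintro rfl; exact hpn (dvd_zero p)⟩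
  set M : ZMod n → F[X] := fun r => (cosetMinPoly F q n ξ r).comp (C β⁻¹ * X)
  set w : Fin ρ₁ ⊕ Fin ρ₂ ⊕ Fin ρ₂ → F[X] :=
    Sum.elim (fun l => M (i l)) (Sum.elim (fun l => M (j l)) (fun l => M (-j l)))
  have hN : p ^ η ≠ 0 := pow_ne_zero _ (Fact.out : p.Prime).ne_zero
  have hpow : ((X : F[X]) ^ n - C (β ^ n)) ^ p ^ η = C lam * (∏ s, w s) ^ p ^ η := by
    rw [sub_pow_char_pow, ← pow_mul, ← C_pow, ← pow_mul, mul_comm n, ← hL, hlam, hfact]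
    simp only [w, M, Fintype.prod_sum_type, Sum.elim_inl, Sum.elim_inr, mul_pow,
      Finset.prod_mul_distrib, Finset.prod_pow]
    ring
  have hw_sf : Squarefree (∏ s, w s) :=
    Squarefree.squarefree_of_dvd
      ((IsIntegrallyClosed.pow_dvd_pow_iff hN).mp ⟨C lam, by rw [hpow, mul_comm]⟩)
      (separable_X_pow_sub_C' p n _ hpn (pow_ne_zero n hβ)).squarefree
  have hw_unit : ∀ s, ¬IsUnit (w s) := by
    rintro (l | l | l) <;> exact not_isUnit_cosetMinPoly_comp q ξ hβ _
  have hg' : g = ∏ s, w s ^ Sum.elim a (Sum.elim b c) s := by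
    simp only [hg, w, M, Fintype.prod_sum_type, Sum.elim_inl, Sum.elim_inr,
      Finset.prod_mul_distrib]
  have hh' : hdag = ∏ s, w s ^ Sum.elim (fun l => p ^ η - a l)
      (Sum.elim (fun l => p ^ η - c l) (fun l => p ^ η - b l)) s := by
    simp only [hh, w, M, Fintype.prod_sum_type, Sum.elim_inl, Sum.elim_inr,
      Finset.prod_mul_distrib]
    ring
  rw [hg', hh', prod_pow_dvd_prod_pow_iff_of_squarefree hw_sf hw_unit]
  simp only [Sum.forall, Sum.elim_inl, Sum.elim_inr, tsub_le_iff_right, two_mul,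
    add_comm (c _) (b _), and_self]

/-- repeated-root constacyclic codes, weak self-duality. With
`L = pᶯ n`, `p ∤ n`, generator
`g = ∏ M_{i_l}(β⁻¹x)^{a_l} ∏ M_{j_l}(β⁻¹x)^{b_l} M_{-j_l}(β⁻¹x)^{c_l}` over symmetric
cosets `C_{i_l}` and asymmetric pairs `(C_{j_l}, C_{-j_l})`, and dual generator `h†`,
one has `C ⊆ C^⊥` (i.e. `h† ∣ g`) iff `2a_l ≥ pᶯ` and `b_l + c_l ≥ pᶯ` for all `l`. -/
theorem repeatedRoot_weakly_self_dual_iff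
    (F : Type*) [Field F] (p η n q L ρ₁ ρ₂ : ℕ) [Fact p.Prime] [CharP F p]
    (hpn : ¬ p ∣ n) (hn : 0 < n) (hL : L = p ^ η * n)
    (ξ β lam : F) (hξ : IsPrimitiveRoot ξ n) (hβ : β ≠ 0) (hlam : β ^ L = lam)
    (i : Fin ρ₁ → ZMod n) (j : Fin ρ₂ → ZMod n)
    (a : Fin ρ₁ → ℕ) (b c : Fin ρ₂ → ℕ)
    (hsym : ∀ l, -(i l) ∈ qCoset q n (i l))
    (hasym : ∀ l, -(j l) ∉ qCoset q n (j l))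
    (ha : ∀ l, a l ≤ p ^ η) (hb : ∀ l, b l ≤ p ^ η) (hc : ∀ l, c l ≤ p ^ η)
    (hfact : (X : F[X]) ^ L - C lam =
      C lam * (∏ l, ((cosetMinPoly F q n ξ (i l)).comp (C β⁻¹ * X)) ^ (p ^ η)) *
        ∏ l, ((cosetMinPoly F q n ξ (j l)).comp (C β⁻¹ * X) *
              (cosetMinPoly F q n ξ (-(j l))).comp (C β⁻¹ * X)) ^ (p ^ η))
    (g hdag : F[X])
    (hg : g = (∏ l, ((cosetMinPoly F q n ξ (i l)).comp (C β⁻¹ * X)) ^ (a l)) *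
      ∏ l, ((cosetMinPoly F q n ξ (j l)).comp (C β⁻¹ * X)) ^ (b l) *
            ((cosetMinPoly F q n ξ (-(j l))).comp (C β⁻¹ * X)) ^ (c l))
    (hh : hdag = (∏ l, ((cosetMinPoly F q n ξ (i l)).comp (C β⁻¹ * X)) ^ (p ^ η - a l)) *
      ∏ l, ((cosetMinPoly F q n ξ (-(j l))).comp (C β⁻¹ * X)) ^ (p ^ η - b l) *
            ((cosetMinPoly F q n ξ (j l)).comp (C β⁻¹ * X)) ^ (p ^ η - c l)) :
    hdag ∣ g ↔ (∀ l, p ^ η ≤ 2 * a l) ∧ (∀ l, p ^ η ≤ b l + c l) :=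
  repeatedRoot_weakly_self_dual_iff_general F p η n q L ρ₁ ρ₂ hpn hL ξ β lam hβ hlam i j a b c hfact
    g hdag hg hh
end

section
/- Let H be the (δ-1) × n matrix over F_{q^m} with entries H_{r,c} = (βξ^{b+r})^c for r = 0,...,δ-2 and c = 0,...,n-1, where ξ is a primitive n-th root of unity, β nonzero, b arbitrary, and n | q^m - 1 so that the elements βξ^b, ..., βξ^{b+δ-2} and (if needed) the column ratios are distinct. Then any δ-1 columns of H are linearly independent; consequently any nonzero vector in the null space of H has Hamming weight at least δ. -/
/-!
Column `c` of `H` is `(β ξ^b)^c` times the Vandermonde vector `((ξ^c)^r)_r`, and the `ξ^c` with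
`c < n` are distinct because `ξ` is a primitive `n`-th root of unity. Hence any `δ - 1` columns
form a Vandermonde matrix with nonzero column scalings and are independent. A nonzero vector of
weight at most `δ - 1` in the kernel of `H` would be a nontrivial relation among at most `δ - 1`
columns.
-/

open Finset Matrix

theorem linearIndepOn_of_card_le {R M ι : Type*} [Semiring R] [AddCommMonoid M] [Module R M]
    [Fintype ι] {f : ι → M} {d : ℕ} (hd : d ≤ Fintype.card ι)
    (hf : ∀ s : Fin d → ι, Function.Injective s → LinearIndependent R (f ∘ s))
    (T : Finset ι) (hT : #T ≤ d) : LinearIndepOn R f T := by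
  obtain ⟨U, hTU, -, hU⟩ := exists_subsuperset_card_eq (subset_univ T) hT (by simpa using hd)
  let e : U ≃ Fin d := U.equivFinOfCardEq hU
  have hrange : Set.range (Subtype.val ∘ e.symm) = U := by
    rw [e.symm.surjective.range_comp, Subtype.range_coe]
  have hinj : Function.Injective (Subtype.val ∘ e.symm) :=
    Subtype.val_injective.comp e.symm.injective
  have hU_indep : LinearIndepOn R f U := by
    rw [← hrange, linearIndepOn_range_iff hinj]
    exact hf _ hinj
  exact hU_indep.mono (by exact_mod_cast hTU)

theorem Matrix.lt_card_filter_ne_zero_of_mulVec_eq_zero {R m ι : Type*} [CommRing R]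
    [DecidableEq R] [Fintype ι] {H : Matrix m ι R} {d : ℕ}
    (hH : ∀ T : Finset ι, #T ≤ d → LinearIndepOn R Hᵀ T)
    {v : ι → R} (hv : H *ᵥ v = 0) (hv0 : v ≠ 0) : d < #{i | v i ≠ 0} := by
  by_contra! hle
  have hrel : ∑ c ∈ {i | v i ≠ 0}, v c • Hᵀ c = 0 := by
    rw [sum_filter_of_ne (f := fun c => v c • Hᵀ c) fun c _ hc => left_ne_zero_of_smul hc, ← hv,
      mulVec_eq_sum]
    simp only [op_smul_eq_smul]
  obtain ⟨c, hc⟩ := Function.ne_iff.1 hv0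
  exact hc (linearIndepOn_finset_iff.1 (hH _ hle) v hrel c (by simpa using hc))

theorem linearIndependent_constacyclic_columns {F : Type*} [Field F] {n d b : ℕ} {ξ β : F}
    (hξ : IsPrimitiveRoot ξ n) (hβ : β ≠ 0) {s : Fin d → Fin n} (hs : Function.Injective s) :
    LinearIndependent F fun k : Fin d => fun r : Fin d => (β * ξ ^ (b + (r : ℕ))) ^ (s k : ℕ) := by
  let x : Fin d → F := fun k => ξ ^ (s k : ℕ)
  have hx : Function.Injective x := fun k l h =>
    hs (Fin.val_injective (hξ.pow_inj (s k).isLt (s l).isLt h))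
  let u : Fin d → Fˣ := fun k => Units.mk0 ((β * ξ ^ b) ^ (s k : ℕ))
    (pow_ne_zero _ (mul_ne_zero hβ (pow_ne_zero _ (hξ.ne_zero (s k).pos.ne'))))
  have hfactor : (fun k : Fin d => fun r : Fin d => (β * ξ ^ (b + (r : ℕ))) ^ (s k : ℕ)) =
      u • fun k => vandermonde x k := by
    funext k r
    simp only [u, x, Pi.smul_apply', Units.smul_mk0, Pi.smul_apply, smul_eq_mul, vandermonde_apply]
    ring
  rw [hfactor]
  exact (linearIndependent_rows_of_det_ne_zero (det_vandermonde_ne_zero_iff.2 hx)).units_smul u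

theorem constacyclic_BCH_bound_general
    (F : Type*) [Field F] [DecidableEq F] (n δ b : ℕ)
    (hδn : δ - 1 ≤ n) (ξ β : F)
    (hξ : IsPrimitiveRoot ξ n) (hβ : β ≠ 0)
    (H : Matrix (Fin (δ - 1)) (Fin n) F)
    (hH : ∀ (r : Fin (δ - 1)) (c : Fin n), H r c = (β * ξ ^ (b + (r : ℕ))) ^ (c : ℕ)) :
    (∀ s : Fin (δ - 1) → Fin n, Function.Injective s →
        LinearIndependent F (fun k : Fin (δ - 1) => fun r : Fin (δ - 1) => H r (s k))) ∧
      (∀ v : Fin n → F, H.mulVec v = 0 → v ≠ 0 →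
        δ ≤ (Finset.univ.filter (fun i => v i ≠ 0)).card) := by
  have hcols (s : Fin (δ - 1) → Fin n) (hs : Function.Injective s) :
      LinearIndependent F (fun k : Fin (δ - 1) => fun r : Fin (δ - 1) => H r (s k)) := by
    simpa only [hH] using linearIndependent_constacyclic_columns hξ hβ hs
  refine ⟨hcols, fun v hv hv0 => ?_⟩
  have hweight := H.lt_card_filter_ne_zero_of_mulVec_eq_zero
    (linearIndepOn_of_card_le (by simpa using hδn) hcols) hv hv0
  omega

/-- BCH bound for constacyclic codes. For the `(δ-1) × n` parity check
matrix `H` with entries `H r c = (β ξ^{b+r})^c`, any `δ-1` columns are linearly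
independent, and consequently any nonzero vector in the null space of `H` has
Hamming weight at least `δ`. -/
theorem constacyclic_BCH_bound
    (F : Type*) [Field F] [DecidableEq F] (n δ b : ℕ) (hδ : 1 ≤ δ)
    (hδn : δ - 1 ≤ n) (hn : 0 < n) (ξ β : F)
    (hξ : IsPrimitiveRoot ξ n) (hβ : β ≠ 0)
    (H : Matrix (Fin (δ - 1)) (Fin n) F)
    (hH : ∀ (r : Fin (δ - 1)) (c : Fin n), H r c = (β * ξ ^ (b + (r : ℕ))) ^ (c : ℕ)) :
    (∀ s : Fin (δ - 1) → Fin n, Function.Injective s →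
        LinearIndependent F (fun k : Fin (δ - 1) => fun r : Fin (δ - 1) => H r (s k))) ∧
      (∀ v : Fin n → F, H.mulVec v = 0 → v ≠ 0 →
        δ ≤ (Finset.univ.filter (fun i => v i ≠ 0)).card) :=
  constacyclic_BCH_bound_general F n δ b hδn ξ β hξ hβ H hH
end

section
/- In the extended-Euclidean spectral decoding setting, suppose Γ(x)μ(x) ≡ P(x) mod (x^n - λ) and Γ'(x)μ(x) ≡ P'(x) mod (x^n - λ), with deg P + deg Γ' < n and deg P' + deg Γ < n. Then P(x)Γ'(x) = Γ(x)P'(x) as polynomials, and hence if Γ | P and Γ' | P' then P/Γ = P'/Γ'. -/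
/-!
Eliminating `μ` from the two congruences shows that `xⁿ - λ` divides `P Γ' - Γ P'`, a polynomial
of degree `< n` by the degree bounds; hence it vanishes. The quotients then agree by cross-multiplication.
-/

open Polynomial

theorem dvd_mul_sub_mul_of_dvd_mul_sub {R : Type*} [CommRing R] {m u a a' b b' : R}
    (h : m ∣ a * u - b) (h' : m ∣ a' * u - b') : m ∣ b * a' - a * b' := by
  have hcomb : b * a' - a * b' = a * (a' * u - b') - a' * (a * u - b) := by ring
  rw [hcomb]
  exact dvd_sub (h'.mul_left a) (h.mul_left a')

namespace Polynomial

variable {R : Type*} [CommRing R] [NoZeroDivisors R]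

theorem mul_eq_mul_of_dvd_mul_sub_of_natDegree_lt {m μ Γ Γ' P P' : R[X]}
    (h : m ∣ Γ * μ - P) (h' : m ∣ Γ' * μ - P')
    (hd : P.natDegree + Γ'.natDegree < m.natDegree)
    (hd' : P'.natDegree + Γ.natDegree < m.natDegree) :
    P * Γ' = Γ * P' := by
  have hlt : (P * Γ' - Γ * P').natDegree < m.natDegree :=
    calc (P * Γ' - Γ * P').natDegree
        ≤ max (P * Γ').natDegree (Γ * P').natDegree := natDegree_sub_le _ _
      _ ≤ max (P.natDegree + Γ'.natDegree) (Γ.natDegree + P'.natDegree) :=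
          max_le_max natDegree_mul_le natDegree_mul_le
      _ < m.natDegree := max_lt hd (by omega)
  exact sub_eq_zero.mp (eq_zero_of_dvd_of_natDegree_lt (dvd_mul_sub_mul_of_dvd_mul_sub h h') hlt)

end Polynomial

theorem key_equation_uniqueness_general
    (F : Type*) [Field F] (n : ℕ) (lam : F)
    (μ Γ Γ' P P' : F[X])
    (h1 : ((X : F[X]) ^ n - C lam) ∣ (Γ * μ - P))
    (h2 : ((X : F[X]) ^ n - C lam) ∣ (Γ' * μ - P'))
    (hd1 : P.natDegree + Γ'.natDegree < n)
    (hd2 : P'.natDegree + Γ.natDegree < n) :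
    P * Γ' = Γ * P' ∧
      (Γ ∣ P → Γ' ∣ P' → Γ ≠ 0 → Γ' ≠ 0 → P / Γ = P' / Γ') := by
  have hcross : P * Γ' = Γ * P' := by
    apply mul_eq_mul_of_dvd_mul_sub_of_natDegree_lt h1 h2 <;> rwa [natDegree_X_pow_sub_C]
  refine ⟨hcross, fun hP hP' hΓ hΓ' => ?_⟩
  rw [EuclideanDomain.div_eq_div_iff_mul_eq_mul_of_dvd hΓ hΓ' hP hP', mul_comm]
  exact hcross

/-- uniqueness of the key-equation solution in the spectral decoder.
If `Γμ ≡ P` and `Γ'μ ≡ P'` mod `xⁿ - λ` with `deg P + deg Γ' < n` and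
`deg P' + deg Γ < n`, then `P Γ' = Γ P'` as polynomials; hence if `Γ ∣ P` and
`Γ' ∣ P'` (with `Γ, Γ'` nonzero) then `P/Γ = P'/Γ'`. -/
theorem key_equation_uniqueness
    (F : Type*) [Field F] (n : ℕ) (hn : 0 < n) (lam : F) (hlam : lam ≠ 0)
    (μ Γ Γ' P P' : F[X]) (hμ : μ.natDegree < n)
    (h1 : ((X : F[X]) ^ n - C lam) ∣ (Γ * μ - P))
    (h2 : ((X : F[X]) ^ n - C lam) ∣ (Γ' * μ - P'))
    (hd1 : P.natDegree + Γ'.natDegree < n)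
    (hd2 : P'.natDegree + Γ.natDegree < n) :
    P * Γ' = Γ * P' ∧
      (Γ ∣ P → Γ' ∣ P' → Γ ≠ 0 → Γ' ≠ 0 → P / Γ = P' / Γ') :=
  key_equation_uniqueness_general F n lam μ Γ Γ' P P' h1 h2 hd1 hd2
end
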